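/- Let f : ℝ → ℝ be C² with f''(u) ≥ c > 0 for all u, let t > 0, and let u : ℝ → ℝ be a bounded function satisfying the Oleinik one-sided estimate u(y) − u(x) ≤ (y−x)/(c t) for all x < y outside a Lebesgue-null set N. Then for every R > 0 the restriction of u to [−R, R] has bounded variation (after modification on a null set), with total variation at most 4R/(c t) + 2‖u‖_∞. -/
import Mathlib


theorem stmt10 (f : ℝ → ℝ) (hf : ContDiff ℝ 2 f) (c : ℝ) (hc : 0 < c)
    (hconv : ∀ x, c ≤ deriv (deriv f) x)
    (t : ℝ) (ht : 0 < t) (u : ℝ → ℝ) (hum : Measurable u)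
    (M : ℝ) (hM : ∀ x, |u x| ≤ M)
    (N : Set ℝ) (hN : MeasureTheory.volume N = 0)
    (hole : ∀ x y, x ∉ N → y ∉ N → x < y → u y - u x ≤ (y - x) / (c * t)) :
    ∀ R, 0 < R → ∃ v : ℝ → ℝ, (∀ᵐ x : ℝ, v x = u x) ∧
      eVariationOn v (Set.Icc (-R) R) ≤ ENNReal.ofReal (4 * R / (c * t) + 2 * M) := by
  intro R hR
  have hct0 : 0 < c * t := mul_pos hc ht
  set ct := c * t with hct
  set w : ℝ → ℝ := fun s => s / ct - u s with hw
  -- S = Nᶜ intersects every Iic x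
  have hne : ∀ x : ℝ, (Nᶜ ∩ Set.Iic x).Nonempty := by
    intro x
    by_contra h
    rw [Set.not_nonempty_iff_eq_empty] at h
    have hsub : Set.Iic x ⊆ N := by
      intro y hy
      by_contra hyN
      exact Set.eq_empty_iff_forall_notMem.1 h y ⟨hyN, hy⟩
    have h2 := MeasureTheory.measure_mono (μ := MeasureTheory.volume) hsub
    rw [hN, Real.volume_Iic] at h2
    simp at h2
  have hbdd : ∀ x : ℝ, BddAbove (w '' (Nᶜ ∩ Set.Iic x)) := by
    intro x
    refine ⟨x / ct + M, ?_⟩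
    rintro _ ⟨s, ⟨hs, hsx⟩, rfl⟩
    have h1 : s / ct ≤ x / ct := by
      exact (div_le_div_iff_of_pos_right hct0).2 hsx
    have h2 : -M ≤ u s := (abs_le.1 (hM s)).1
    simp only [hw]
    linarith
  set W : ℝ → ℝ := fun x => sSup (w '' (Nᶜ ∩ Set.Iic x)) with hW
  have hWmono : Monotone W := by
    intro x y hxy
    apply csSup_le_csSup (hbdd y) ((hne x).image w)
    apply Set.image_mono
    exact Set.inter_subset_inter_right _ (Set.Iic_subset_Iic.2 hxy)
  have hWeq : ∀ x, x ∉ N → W x = w x := by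
    intro x hx
    apply le_antisymm
    · apply csSup_le ((hne x).image w)
      rintro _ ⟨s, ⟨hs, hsx⟩, rfl⟩
      rcases eq_or_lt_of_le (Set.mem_Iic.1 hsx) with rfl | hlt
      · exact le_rfl
      · have := hole s x hs hx hlt
        simp only [hw, sub_div] at this ⊢
        linarith
    · exact le_csSup (hbdd x) ⟨x, ⟨hx, Set.mem_Iic.2 le_rfl⟩, rfl⟩
  set v : ℝ → ℝ := fun x => x / ct - W x with hv
  refine ⟨v, ?_, ?_⟩
  · -- a.e. equality
    have hae : ∀ᵐ x : ℝ, x ∉ N := by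
      rw [MeasureTheory.ae_iff]
      simpa using hN
    filter_upwards [hae] with x hx
    rw [hv]
    simp only [hWeq x hx, hw]
    ring
  · -- variation bound
    have hWR : W R ≤ R / ct + M := by
      apply csSup_le ((hne R).image w)
      rintro _ ⟨s, ⟨hs, hsx⟩, rfl⟩
      have h1 : s / ct ≤ R / ct := by
        exact (div_le_div_iff_of_pos_right hct0).2 hsx
      have h2 : -M ≤ u s := (abs_le.1 (hM s)).1
      simp only [hw]
      linarith
    have hWmR : -R / ct - M ≤ W (-R) := by
      apply le_of_forall_pos_le_add
      intro ε hε
      obtain ⟨s, hsN, hs1, hs2⟩ : ∃ s, s ∉ N ∧ -R - ε * ct < s ∧ s ≤ -R := by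
        by_contra h
        push_neg at h
        have hsub : Set.Ioc (-R - ε * ct) (-R) ⊆ N := by
          intro y ⟨hy1, hy2⟩
          by_contra hyN
          exact absurd hy2 (not_le.2 (h y hyN hy1))
        have h2 := MeasureTheory.measure_mono (μ := MeasureTheory.volume) hsub
        rw [hN, Real.volume_Ioc] at h2
        have h3 : (0:ℝ) < -R - (-R - ε * ct) := by
          have := mul_pos hε hct0; linarith
        rw [nonpos_iff_eq_zero, ENNReal.ofReal_eq_zero] at h2
        linarith
      have hle : w s ≤ W (-R) := le_csSup (hbdd (-R)) ⟨s, ⟨hsN, hs2⟩, rfl⟩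
      have h2 : u s ≤ M := (abs_le.1 (hM s)).2
      have h4 : (-R - ε * ct) / ct ≤ s / ct := by
        exact (div_le_div_iff_of_pos_right hct0).2 hs1.le
      have h5 : (-R - ε * ct) / ct = -R / ct - ε := by
        field_simp
      simp only [hw] at hle
      linarith
    -- termwise estimate
    have key : ∀ x y : ℝ, x ≤ y → |v y - v x| ≤ (y - x) / ct + (W y - W x) := by
      intro x y hxy
      have h1 : 0 ≤ (y - x) / ct := div_nonneg (by linarith) hct0.le
      have h2 : W x ≤ W y := hWmono hxy
      have h3 : v y - v x = (y - x) / ct - (W y - W x) := by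
        simp only [hv, sub_div]; ring
      rw [abs_le]
      constructor <;> [skip; skip] <;> rw [h3] <;> linarith
    refine iSup_le ?_
    rintro ⟨n, q, hq, hmem⟩
    simp only
    have hdist : ∀ i : ℕ, edist (v (q (i + 1))) (v (q i))
        = ENNReal.ofReal (|v (q (i + 1)) - v (q i)|) := by
      intro i
      rw [edist_dist, Real.dist_eq]
    calc ∑ i ∈ Finset.range n, edist (v (q (i + 1))) (v (q i))
        = ∑ i ∈ Finset.range n, ENNReal.ofReal (|v (q (i + 1)) - v (q i)|) := by
          simp_rw [hdist]
      _ = ENNReal.ofReal (∑ i ∈ Finset.range n, |v (q (i + 1)) - v (q i)|) := by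
          rw [ENNReal.ofReal_sum_of_nonneg]
          intro i _
          exact abs_nonneg _
      _ ≤ ENNReal.ofReal (4 * R / ct + 2 * M) := by
          apply ENNReal.ofReal_le_ofReal
          have hsum : ∑ i ∈ Finset.range n, |v (q (i + 1)) - v (q i)|
              ≤ ∑ i ∈ Finset.range n, ((q (i + 1) - q i) / ct + (W (q (i + 1)) - W (q i))) := by
            apply Finset.sum_le_sum
            intro i _
            exact key _ _ (hq (Nat.le_succ i))
          have htel1 : ∑ i ∈ Finset.range n, (q (i + 1) - q i) = q n - q 0 :=
            Finset.sum_range_sub q n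
          have htel2 : ∑ i ∈ Finset.range n, (W (q (i + 1)) - W (q i)) = W (q n) - W (q 0) :=
            Finset.sum_range_sub (fun i => W (q i)) n
          have hsplit : ∑ i ∈ Finset.range n, ((q (i + 1) - q i) / ct + (W (q (i + 1)) - W (q i)))
              = (q n - q 0) / ct + (W (q n) - W (q 0)) := by
            rw [Finset.sum_add_distrib, htel2, ← Finset.sum_div, htel1]
          rw [hsplit] at hsum
          have hq0 := hmem 0
          have hqn := hmem n
          have hb1 : q n - q 0 ≤ 2 * R := by
            have := hq0.1; have := hqn.2; linarith
          have hb2 : (q n - q 0) / ct ≤ 2 * R / ct := by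
            exact (div_le_div_iff_of_pos_right hct0).2 hb1
          have hb3 : W (q n) ≤ W R := hWmono hqn.2
          have hb4 : W (-R) ≤ W (q 0) := hWmono hq0.1
          have hring : 4 * R / ct = 2 * R / ct + (R / ct - (-R / ct)) := by ring
          linarith
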